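/- Let $\mathcal{T}\colon \mathcal{F} \to \mathcal{F}'$ be a map between spaces of formal power series and suppose $\mathcal{T}$ is induced by an analytic differential map of order $\mathbf{m}$ which is regular with $q = 0$ in the sense that $\operatorname{ord}_0(\partial W_i/\partial u_{j,\alpha}(x,\partial F)) \geq \max(0, |\alpha| + 1 - m_j)$ for all formal $F$. Then $\mathcal{T}$ strictly increases the order at the origin by $0$: for all $F, G$, $\operatorname{ord}_0(\mathcal{T}(F) - \mathcal{T}(G)) > \operatorname{ord}_0(F - G)$. -/

import Mathlib

/-!
By Hadamard's lemma, `W(x, u) - W(x, v) = ∑ₚ (uₚ - vₚ) Aₚ(x, u, v)` with smooth coefficients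
`Aₚ = ∫₀¹ ∂W/∂uₚ (x, v + t (u - v)) dt`. Take `u = j^m_x F` and `v = j^m_x G`. For `p = (j, α)`
the factor `∂^α (F_j - G_j)` vanishes to order `N + m_j - |α|`, which is at least `N + 1` when
`|α| < m_j`. When `|α| = m_j`, the coefficient `Aₚ` vanishes at the origin: at `x = 0` the
segment from `v` to `u` consists of the jets of the admissible interpolants `t F + (1 - t) G`,
along which regularity makes `∂W/∂uₚ` vanish. When `|α| > m_j`, `W` does not depend on `uₚ`,
so `Aₚ = 0`. The Leibniz rule adds up the orders.
-/

open scoped BigOperators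

noncomputable section

namespace Stmt16

variable {n : ℕ}

/-- Partial derivative in the `i`-th coordinate direction. -/
def pder (i : Fin n) (f : (Fin n → ℝ) → ℝ) : (Fin n → ℝ) → ℝ :=
  fun x => fderiv ℝ f x (Pi.single i 1)

/-- Iterated partial derivative `∂^{|α|}/∂x^α`. -/
def pdm (α : Fin n → ℕ) (f : (Fin n → ℝ) → ℝ) : (Fin n → ℝ) → ℝ :=
  (List.finRange n).foldr (fun i g => (pder i)^[α i] g) f

/-- `f` vanishes to order at least `N` at the origin: all partial derivatives of
total order `< N` vanish at `0`. -/
def OrdGe (f : (Fin n → ℝ) → ℝ) (N : ℕ) : Prop :=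
  ∀ α : Fin n → ℕ, (∑ i, α i) < N → pdm α f 0 = 0

/-- Index type for the jet coordinates `u_{j,α}`, `|α| ≤ m_j` (each entry of `α` is at
most `m j`). -/
abbrev JetIdx {r : ℕ} (m : Fin r → ℕ) (n : ℕ) := Σ j : Fin r, Fin n → Fin (m j + 1)

/-- The `m`-jet of a tuple of functions, as a point in jet-coordinate space. -/
def jet {r : ℕ} (m : Fin r → ℕ) (F : Fin r → (Fin n → ℝ) → ℝ) (x : Fin n → ℝ) :
    JetIdx (n := n) m → ℝ :=
  fun p => pdm (fun i => (p.2 i : ℕ)) (F p.1) x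

open scoped ContDiff

def pders (l : List (Fin n)) (f : (Fin n → ℝ) → ℝ) : (Fin n → ℝ) → ℝ :=
  l.foldr pder f

@[simp] lemma pders_nil (f : (Fin n → ℝ) → ℝ) : pders [] f = f := rfl

@[simp] lemma pders_cons (i : Fin n) (l : List (Fin n)) (f : (Fin n → ℝ) → ℝ) :
    pders (i :: l) f = pder i (pders l f) := rfl

lemma pders_append (l₁ l₂ : List (Fin n)) (f : (Fin n → ℝ) → ℝ) :
    pders (l₁ ++ l₂) f = pders l₁ (pders l₂ f) :=
  List.foldr_append ..

lemma pders_replicate (k : ℕ) (i : Fin n) (f : (Fin n → ℝ) → ℝ) :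
    pders (List.replicate k i) f = (pder i)^[k] f := by
  induction k with
  | zero => rfl
  | succ k ih => rw [List.replicate_succ, pders_cons, ih, Function.iterate_succ_apply']

def multiIndexList (α : Fin n → ℕ) : List (Fin n) :=
  (List.finRange n).flatMap fun i => List.replicate (α i) i

lemma pdm_eq_pders (α : Fin n → ℕ) (f : (Fin n → ℝ) → ℝ) :
    pdm α f = pders (multiIndexList α) f := by
  unfold pdm multiIndexList
  induction List.finRange n with
  | nil => rfl
  | cons i L ih => rw [List.foldr_cons, List.flatMap_cons, pders_append, ih, pders_replicate]

lemma length_multiIndexList (α : Fin n → ℕ) : (multiIndexList α).length = ∑ i, α i := by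
  simp [multiIndexList, List.length_flatMap, Fin.sum_univ_def]

lemma count_multiIndexList (α : Fin n → ℕ) (j : Fin n) : (multiIndexList α).count j = α j := by
  simp [multiIndexList, List.count_flatMap, List.count_replicate, ← Fin.sum_univ_def]

lemma perm_multiIndexList_count (l : List (Fin n)) :
    l.Perm (multiIndexList fun i => l.count i) :=
  List.perm_iff_count.mpr fun a => by rw [count_multiIndexList]

lemma pdm_zero (f : (Fin n → ℝ) → ℝ) : pdm 0 f = f := by
  unfold pdm
  induction List.finRange n <;> simp_all

lemma pders_const_zero (l : List (Fin n)) : pders l (fun _ => (0 : ℝ)) = fun _ => 0 := by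
  induction l with
  | nil => rfl
  | cons i l ih => ext; simp [ih, pder]

section OpenSet

variable {U : Set (Fin n → ℝ)} {f g : (Fin n → ℝ) → ℝ}

lemma _root_.ContDiffOn.pder (hU : IsOpen U) (hf : ContDiffOn ℝ ∞ f U) (i : Fin n) :
    ContDiffOn ℝ ∞ (pder i f) U :=
  (hf.fderiv_of_isOpen hU (by simp)).clm_apply contDiffOn_const

lemma _root_.ContDiffOn.pders (hU : IsOpen U) (hf : ContDiffOn ℝ ∞ f U) (l : List (Fin n)) :
    ContDiffOn ℝ ∞ (pders l f) U := by
  induction l with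
  | nil => exact hf
  | cons i l ih => exact ih.pder hU i

lemma pder_congr (hU : IsOpen U) (h : Set.EqOn f g U) (i : Fin n) :
    Set.EqOn (pder i f) (pder i g) U :=
  fun x hx => by simp only [pder, (h.eventuallyEq_of_mem (hU.mem_nhds hx)).fderiv_eq]

lemma pders_congr (hU : IsOpen U) (h : Set.EqOn f g U) (l : List (Fin n)) :
    Set.EqOn (pders l f) (pders l g) U := by
  induction l with
  | nil => exact h
  | cons i l ih => exact pder_congr hU ih i

lemma pders_linear_comb (hU : IsOpen U) (hf : ContDiffOn ℝ ∞ f U) (hg : ContDiffOn ℝ ∞ g U)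
    (a b : ℝ) (l : List (Fin n)) :
    Set.EqOn (pders l fun x => a * f x + b * g x)
      (fun x => a * pders l f x + b * pders l g x) U := by
  induction l with
  | nil => exact fun _ _ => rfl
  | cons i l ih =>
    intro x hx
    have hdiff {h : (Fin n → ℝ) → ℝ} (hh : ContDiffOn ℝ ∞ h U) : DifferentiableAt ℝ (pders l h) x :=
      ((hh.pders hU l).contDiffAt (hU.mem_nhds hx)).differentiableAt (by simp)
    rw [pders_cons, pder_congr hU ih i hx]
    simp only [pders_cons, pder]
    rw [fderiv_fun_add ((hdiff hf).const_mul a) ((hdiff hg).const_mul b),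
      fderiv_const_mul (hdiff hf), fderiv_const_mul (hdiff hg)]
    rfl

lemma pders_sub (hU : IsOpen U) (hf : ContDiffOn ℝ ∞ f U) (hg : ContDiffOn ℝ ∞ g U)
    (l : List (Fin n)) :
    Set.EqOn (pders l fun x => f x - g x) (fun x => pders l f x - pders l g x) U := by
  simpa [sub_eq_add_neg] using pders_linear_comb hU hf hg 1 (-1) l

lemma pder_mul (hU : IsOpen U) (hf : ContDiffOn ℝ ∞ f U) (hg : ContDiffOn ℝ ∞ g U) (i : Fin n) :
    Set.EqOn (pder i fun x => f x * g x) (fun x => pder i f x * g x + f x * pder i g x) U := by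
  intro x hx
  have hdiff {h : (Fin n → ℝ) → ℝ} (hh : ContDiffOn ℝ ∞ h U) : DifferentiableAt ℝ h x :=
    (hh.contDiffAt (hU.mem_nhds hx)).differentiableAt (by simp)
  simp only [pder, fderiv_fun_mul (hdiff hf) (hdiff hg)]
  simp only [add_apply, smul_apply, smul_eq_mul]
  ring

end OpenSet

/-- `OrdGe` with the partial derivatives taken in arbitrary order, which turns the Leibniz rule
into an induction on lists. -/
def VanishesTo (f : (Fin n → ℝ) → ℝ) (N : ℕ) : Prop :=
  ∀ l : List (Fin n), l.length < N → pders l f 0 = 0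

lemma vanishesTo_order_zero (f : (Fin n → ℝ) → ℝ) : VanishesTo f 0 :=
  fun _ hl => absurd hl (Nat.not_lt_zero _)

lemma vanishesTo_const_zero (N : ℕ) : VanishesTo (n := n) (fun _ => 0) N :=
  fun l _ => by rw [pders_const_zero]

namespace VanishesTo

variable {U : Set (Fin n → ℝ)} {f g : (Fin n → ℝ) → ℝ} {A B N : ℕ}

lemma mono (h : VanishesTo f N) (hAN : A ≤ N) : VanishesTo f A :=
  fun l hl => h l (hl.trans_le hAN)

lemma one_iff : VanishesTo f 1 ↔ f 0 = 0 :=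
  ⟨fun h => h [] Nat.one_pos,
    fun h l hl => by rwa [List.length_eq_zero_iff.mp (Nat.lt_one_iff.mp hl)]⟩

lemma pders (h : VanishesTo f N) (l : List (Fin n)) : VanishesTo (pders l f) (N - l.length) :=
  fun l' hl' => by
    rw [← pders_append]
    exact h _ (by rw [List.length_append]; omega)

lemma congr (hU : IsOpen U) (h0 : 0 ∈ U) (hfg : Set.EqOn f g U) (hf : VanishesTo f N) :
    VanishesTo g N :=
  fun l hl => pders_congr hU hfg l h0 ▸ hf l hl

lemma add (hU : IsOpen U) (h0 : 0 ∈ U) (hfs : ContDiffOn ℝ ∞ f U) (hgs : ContDiffOn ℝ ∞ g U)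
    (hf : VanishesTo f N) (hg : VanishesTo g N) : VanishesTo (fun x => f x + g x) N :=
  fun l hl => by simpa [hf l hl, hg l hl] using pders_linear_comb hU hfs hgs 1 1 l h0

lemma sum {ι : Type*} (hU : IsOpen U) (h0 : 0 ∈ U) (s : Finset ι) {f : ι → (Fin n → ℝ) → ℝ}
    (hfs : ∀ k ∈ s, ContDiffOn ℝ ∞ (f k) U) (hf : ∀ k ∈ s, VanishesTo (f k) N) :
    VanishesTo (fun x => ∑ k ∈ s, f k x) N := by
  classical
  induction s using Finset.induction_on with
  | empty => simpa using vanishesTo_const_zero N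
  | insert k s hk ih =>
    rw [Finset.forall_mem_insert] at hfs hf
    simp only [Finset.sum_insert hk]
    exact add hU h0 hfs.1 (ContDiffOn.sum hfs.2) hf.1 (ih hfs.2 hf.2)

lemma mul (hU : IsOpen U) (h0 : 0 ∈ U) (hfs : ContDiffOn ℝ ∞ f U) (hgs : ContDiffOn ℝ ∞ g U)
    (hf : VanishesTo f A) (hg : VanishesTo g B) : VanishesTo (fun x => f x * g x) (A + B) := by
  intro l hl
  induction l using List.reverseRecOn generalizing f g A B with
  | nil =>
    rcases Nat.eq_zero_or_pos A with rfl | hA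
    · simp [one_iff.mp (hg.mono (by simp at hl; omega))]
    · simp [one_iff.mp (hf.mono hA)]
  | append_singleton l i ih =>
    rw [List.length_append, List.length_singleton] at hl
    have hsum := pders_linear_comb hU ((hfs.pder hU i).mul hgs) (hfs.mul (hgs.pder hU i)) 1 1 l h0
    simp only [one_mul] at hsum
    rw [pders_append, pders_cons, pders_nil, pders_congr hU (pder_mul hU hfs hgs i) l h0, hsum,
      ih (hfs.pder hU i) hgs (hf.pders [i]) hg (by simp; omega),
      ih hfs (hgs.pder hU i) hf (hg.pders [i]) (by simp; omega), add_zero]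

end VanishesTo

section Symmetry

variable {U : Set (Fin n → ℝ)} {f : (Fin n → ℝ) → ℝ}

lemma pder_comm (hU : IsOpen U) (hf : ContDiffOn ℝ ∞ f U) (i j : Fin n) :
    Set.EqOn (pder i (pder j f)) (pder j (pder i f)) U := by
  intro x hx
  have hfx := hf.contDiffAt (hU.mem_nhds hx)
  have hd : DifferentiableAt ℝ (fderiv ℝ f) x :=
    (hfx.fderiv_right (m := ∞) (by simp)).differentiableAt (by simp)
  have hswap (v w : Fin n → ℝ) :
      fderiv ℝ (fun y => fderiv ℝ f y v) x w = fderiv ℝ (fderiv ℝ f) x w v := by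
    rw [fderiv_clm_apply hd (differentiableAt_const v)]
    simp
  unfold pder
  rw [hswap, hswap]
  refine hfx.isSymmSndFDerivAt ?_ _ _
  rw [minSmoothness_of_isRCLikeNormedField]
  exact ENat.LEInfty.out

lemma pders_perm (hU : IsOpen U) (hf : ContDiffOn ℝ ∞ f U) {l l' : List (Fin n)}
    (h : l.Perm l') : Set.EqOn (pders l f) (pders l' f) U := by
  induction h with
  | nil => exact fun _ _ => rfl
  | cons i _ ih => exact pder_congr hU ih i
  | swap i j l => exact pder_comm hU (hf.pders hU l) j i
  | trans _ _ ih₁ ih₂ => exact ih₁.trans ih₂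

lemma ordGe_iff_vanishesTo (hU : IsOpen U) (h0 : 0 ∈ U) (hf : ContDiffOn ℝ ∞ f U) {N : ℕ} :
    OrdGe f N ↔ VanishesTo f N := by
  refine ⟨fun h l hl => ?_, fun h α hα => ?_⟩
  · have hl' := perm_multiIndexList_count l
    rw [pders_perm hU hf hl' h0, ← pdm_eq_pders]
    exact h _ (by rwa [← length_multiIndexList, ← hl'.length_eq])
  · rw [pdm_eq_pders]
    exact h _ (by rwa [length_multiIndexList])

end Symmetry

section ParametricIntegral

universe u

variable {E G : Type u} [NormedAddCommGroup E] [NormedSpace ℝ E] [ProperSpace E]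
  [NormedAddCommGroup G] [NormedSpace ℝ G]

lemma hasFDerivAt_intervalIntegral_of_contDiff {ψ : E × ℝ → G} (hψ : ContDiff ℝ 1 ψ)
    (a b : ℝ) (z₀ : E) :
    HasFDerivAt (fun z => ∫ t in a..b, ψ (z, t))
      (∫ t in a..b, (fderiv ℝ ψ (z₀, t)).comp (ContinuousLinearMap.inl ℝ E ℝ)) z₀ := by
  have hψ' : Continuous fun w => (fderiv ℝ ψ w).comp (ContinuousLinearMap.inl ℝ E ℝ) :=
    (hψ.continuous_fderiv one_ne_zero).clm_comp continuous_const
  obtain ⟨C, hC⟩ := ((isCompact_closedBall z₀ 1).prod (isCompact_uIcc (a := a) (b := b))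
    ).exists_bound_of_continuousOn hψ'.continuousOn
  refine intervalIntegral.hasFDerivAt_integral_of_dominated_of_fderiv_le
    (F := fun z t => ψ (z, t)) (F' := fun z t => (fderiv ℝ ψ (z, t)).comp (.inl ℝ E ℝ))
    (bound := fun _ => C)
    (Metric.ball_mem_nhds z₀ one_pos) ?_ ?_ ?_ ?_ ?_ ?_
  · exact .of_forall fun z =>
      (hψ.continuous.comp (Continuous.prodMk_right z)).aestronglyMeasurable.restrict
  · exact (hψ.continuous.comp (Continuous.prodMk_right z₀)).intervalIntegrable a b
  · exact (hψ'.comp (Continuous.prodMk_right z₀)).aestronglyMeasurable.restrict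
  · exact .of_forall fun t ht z hz =>
      hC (z, t) ⟨Metric.ball_subset_closedBall hz, Set.uIoc_subset_uIcc ht⟩
  · exact intervalIntegrable_const
  · exact .of_forall fun t _ z _ =>
      (hψ.differentiable one_ne_zero (z, t)).hasFDerivAt.comp z (hasFDerivAt_prodMk_left z t)

lemma contDiff_intervalIntegral {ψ : E × ℝ → G} (hψ : ContDiff ℝ ∞ ψ) (a b : ℝ) :
    ContDiff ℝ ∞ fun z => ∫ t in a..b, ψ (z, t) := by
  refine contDiff_infty.mpr fun k => ?_
  induction k generalizing G with
  | zero =>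
    have hdiff : Differentiable ℝ fun z => ∫ t in a..b, ψ (z, t) := fun z =>
      (hasFDerivAt_intervalIntegral_of_contDiff (hψ.of_le (by simp)) a b z).differentiableAt
    exact contDiff_zero.mpr hdiff.continuous
  | succ k ih =>
    have hψ' : ContDiff ℝ ∞ fun w => (fderiv ℝ ψ w).comp (ContinuousLinearMap.inl ℝ E ℝ) :=
      (hψ.fderiv_right (by simp)).clm_comp contDiff_const
    have hFD (z : E) := hasFDerivAt_intervalIntegral_of_contDiff (hψ.of_le (by simp)) a b z
    rw [Nat.cast_succ, contDiff_succ_iff_fderiv]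
    refine ⟨fun z => (hFD z).differentiableAt, by simp, ?_⟩
    rw [funext fun z => (hFD z).fderiv]
    exact ih hψ'

end ParametricIntegral

lemma fderiv_apply_eq_zero_of_forall_add_smul {X Y : Type*} [NormedAddCommGroup X]
    [NormedSpace ℝ X] [NormedAddCommGroup Y] [NormedSpace ℝ Y] {g : X → Y} {y v : X}
    (h : ∀ s : ℝ, g (y + s • v) = g y) : fderiv ℝ g y v = 0 := by
  by_cases hg : DifferentiableAt ℝ g y
  · rw [← hg.lineDeriv_eq_fderiv, lineDeriv, funext h, deriv_const]
  · simp [fderiv_zero_of_not_differentiableAt hg]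

section Hadamard

variable {E ι : Type} [DecidableEq ι] {f : E × (ι → ℝ) → ℝ}

def hadamardCoeff (f : E × (ι → ℝ) → ℝ) (p : ι) (x : E) (u v : ι → ℝ) : ℝ :=
  ∫ t in (0 : ℝ)..1, fderiv ℝ (fun w => f (x, w)) (v + t • (u - v)) (Pi.single p 1)

lemma hadamardCoeff_eq_zero {p : ι} {x : E} {u v : ι → ℝ}
    (h : ∀ t : ℝ, fderiv ℝ (fun w => f (x, w)) (v + t • (u - v)) (Pi.single p 1) = 0) :
    hadamardCoeff f p x u v = 0 := by
  simp [hadamardCoeff, h]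

variable [Fintype ι]

lemma hadamardCoeff_eq_zero_of_forall_add_smul_single {p : ι} {x : E}
    (h : ∀ u (c : ℝ), f (x, u + c • Pi.single p 1) = f (x, u)) (u v : ι → ℝ) :
    hadamardCoeff f p x u v = 0 :=
  hadamardCoeff_eq_zero fun _ => fderiv_apply_eq_zero_of_forall_add_smul fun c => h _ c

variable [NormedAddCommGroup E] [NormedSpace ℝ E]

lemma sub_eq_sum_hadamardCoeff (hf : ContDiff ℝ 1 f) (x : E) (u v : ι → ℝ) :
    f (x, u) - f (x, v) = ∑ p, (u p - v p) * hadamardCoeff f p x u v := by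
  set g := fun w => f (x, w)
  have hg : ContDiff ℝ 1 g := hf.comp (contDiff_const.prodMk contDiff_id)
  have hderiv (t : ℝ) : HasDerivAt (fun t : ℝ => g (v + t • (u - v)))
      (fderiv ℝ g (v + t • (u - v)) (u - v)) t := by
    refine (hg.differentiable one_ne_zero _).hasFDerivAt.comp_hasDerivAt t ?_
    simpa using ((hasDerivAt_id t).smul_const (u - v)).const_add v
  have hcont (d : ι → ℝ) : Continuous fun t : ℝ => fderiv ℝ g (v + t • (u - v)) d :=
    ((hg.continuous_fderiv one_ne_zero).comp (by fun_prop)).clm_apply continuous_const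
  have hftc := intervalIntegral.integral_eq_sub_of_hasDerivAt (fun t _ => hderiv t)
    ((hcont _).intervalIntegrable 0 1)
  simp only [one_smul, zero_smul, add_sub_cancel, add_zero] at hftc
  have hsplit (w : ι → ℝ) :
      fderiv ℝ g w (u - v) = ∑ p, (u p - v p) * fderiv ℝ g w (Pi.single p 1) := by
    conv_lhs => rw [pi_eq_sum_univ' (u - v)]
    simp [map_sum]
  show g u - g v = _
  simp_rw [← hftc, hsplit, hadamardCoeff]
  rw [intervalIntegral.integral_finsetSum]
  · simp_rw [intervalIntegral.integral_const_mul]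
    rfl
  · exact fun p _ => (continuous_const.mul (hcont _)).intervalIntegrable 0 1

lemma contDiff_hadamardCoeff [ProperSpace E] (hf : ContDiff ℝ ∞ f) (p : ι) :
    ContDiff ℝ ∞ fun z : E × (ι → ℝ) × (ι → ℝ) => hadamardCoeff f p z.1 z.2.1 z.2.2 := by
  refine contDiff_intervalIntegral (ψ := fun w : (E × (ι → ℝ) × (ι → ℝ)) × ℝ =>
    fderiv ℝ (fun u => f (w.1.1, u)) (w.1.2.2 + w.2 • (w.1.2.1 - w.1.2.2)) (Pi.single p 1)) ?_ 0 1
  refine ContDiff.clm_apply ?_ contDiff_const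
  exact ContDiff.fderiv (hf.comp (by fun_prop)) (by fun_prop) (by simp)

end Hadamard

lemma exists_isOpen_forall_contDiffOn {𝕜 ι E F : Type*} [NontriviallyNormedField 𝕜] [Finite ι]
    [NormedAddCommGroup E] [NormedSpace 𝕜 E] [NormedAddCommGroup F] [NormedSpace 𝕜 F]
    [CompleteSpace F] {f : ι → E → F} {x : E} (hf : ∀ k, AnalyticAt 𝕜 (f k) x) :
    ∃ U, IsOpen U ∧ x ∈ U ∧ ∀ k, ContDiffOn 𝕜 ∞ (f k) U := by
  obtain ⟨U, hUf, hU, hxU⟩ :=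
    eventually_nhds_iff.mp (Filter.eventually_all.mpr fun k => (hf k).eventually_analyticAt)
  exact ⟨U, hU, hxU, fun k y hy => (hUf y hy k).contDiffAt.contDiffWithinAt⟩

section Jets

variable {r : ℕ} (m : Fin r → ℕ) {U : Set (Fin n → ℝ)} {f g : (Fin n → ℝ) → ℝ}
  {F G : Fin r → (Fin n → ℝ) → ℝ}

lemma pdm_linear_comb (hU : IsOpen U) (hf : ContDiffOn ℝ ∞ f U) (hg : ContDiffOn ℝ ∞ g U)
    (a b : ℝ) (β : Fin n → ℕ) {x : Fin n → ℝ} (hx : x ∈ U) :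
    pdm β (fun y => a * f y + b * g y) x = a * pdm β f x + b * pdm β g x := by
  simpa only [pdm_eq_pders] using pders_linear_comb hU hf hg a b _ hx

lemma OrdGe.linear_comb (hU : IsOpen U) (h0 : 0 ∈ U) (hf : ContDiffOn ℝ ∞ f U)
    (hg : ContDiffOn ℝ ∞ g U) {N : ℕ} (hfN : OrdGe f N) (hgN : OrdGe g N) (a b : ℝ) :
    OrdGe (fun y => a * f y + b * g y) N := fun β hβ => by
  rw [pdm_linear_comb hU hf hg a b β h0, hfN β hβ, hgN β hβ]
  ring

lemma jet_linear_comb (hU : IsOpen U) (hF : ∀ j, ContDiffOn ℝ ∞ (F j) U)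
    (hG : ∀ j, ContDiffOn ℝ ∞ (G j) U) (a b : ℝ) {x : Fin n → ℝ} (hx : x ∈ U) :
    jet m (fun j y => a * F j y + b * G j y) x = a • jet m F x + b • jet m G x :=
  funext fun p => pdm_linear_comb hU (hF p.1) (hG p.1) a b _ hx

lemma contDiffOn_jet (hU : IsOpen U) (hF : ∀ j, ContDiffOn ℝ ∞ (F j) U) :
    ContDiffOn ℝ ∞ (jet m F) U :=
  contDiffOn_pi.mpr fun p => by simpa only [jet, pdm_eq_pders] using (hF p.1).pders hU _

lemma contDiffOn_jet_sub (hU : IsOpen U) (hF : ∀ j, ContDiffOn ℝ ∞ (F j) U)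
    (hG : ∀ j, ContDiffOn ℝ ∞ (G j) U) (p : JetIdx (n := n) m) :
    ContDiffOn ℝ ∞ (fun x => jet m F x p - jet m G x p) U :=
  (contDiffOn_pi.mp (contDiffOn_jet m hU hF) p).sub (contDiffOn_pi.mp (contDiffOn_jet m hU hG) p)

lemma contDiffOn_hadamardCoeff_jet {f : (Fin n → ℝ) × (JetIdx (n := n) m → ℝ) → ℝ}
    (hf : ContDiff ℝ ∞ f) (hU : IsOpen U) (hF : ∀ j, ContDiffOn ℝ ∞ (F j) U)
    (hG : ∀ j, ContDiffOn ℝ ∞ (G j) U) (p : JetIdx (n := n) m) :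
    ContDiffOn ℝ ∞ (fun x => hadamardCoeff f p x (jet m F x) (jet m G x)) U :=
  (contDiff_hadamardCoeff hf p).comp_contDiffOn
    (contDiffOn_id.prodMk ((contDiffOn_jet m hU hF).prodMk (contDiffOn_jet m hU hG)))

lemma ordGe_sub_of_forall_vanishesTo {f : (Fin n → ℝ) × (JetIdx (n := n) m → ℝ) → ℝ}
    (hf : ContDiff ℝ ∞ f) (hU : IsOpen U) (h0 : 0 ∈ U) (hF : ∀ j, ContDiffOn ℝ ∞ (F j) U)
    (hG : ∀ j, ContDiffOn ℝ ∞ (G j) U) {K : ℕ}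
    (h : ∀ p, VanishesTo
      (fun x => (jet m F x p - jet m G x p) * hadamardCoeff f p x (jet m F x) (jet m G x)) K) :
    OrdGe (fun x => f (x, jet m F x) - f (x, jet m G x)) K := by
  have hs (p : JetIdx (n := n) m) := (contDiffOn_jet_sub m hU hF hG p).mul
    (contDiffOn_hadamardCoeff_jet m hf hU hF hG p)
  simp_rw [sub_eq_sum_hadamardCoeff (hf.of_le (by simp)) _ (jet m F _) (jet m G _)]
  rw [ordGe_iff_vanishesTo hU h0 (ContDiffOn.sum fun p _ => hs p)]
  exact VanishesTo.sum hU h0 _ (fun p _ => hs p) fun p _ => h p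

lemma vanishesTo_jet_sub (hU : IsOpen U) (h0 : 0 ∈ U) (hF : ∀ j, ContDiffOn ℝ ∞ (F j) U)
    (hG : ∀ j, ContDiffOn ℝ ∞ (G j) U) {N : ℕ} (p : JetIdx (n := n) m)
    (hFG : OrdGe (fun x => F p.1 x - G p.1 x) (N + m p.1)) :
    VanishesTo (fun x => jet m F x p - jet m G x p) (N + m p.1 - ∑ t, (p.2 t : ℕ)) := by
  have h := ((ordGe_iff_vanishesTo hU h0 ((hF p.1).sub (hG p.1))).mp hFG).pders
    (multiIndexList fun t => (p.2 t : ℕ))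
  rw [length_multiIndexList] at h
  refine h.congr hU h0 ?_
  simpa only [jet, pdm_eq_pders] using pders_sub hU (hF p.1) (hG p.1) _

/-- Regularity with `q = 0`. -/
def IsRegularJetMap (f : (Fin n → ℝ) × (JetIdx (n := n) m → ℝ) → ℝ) : Prop :=
  ∀ F : Fin r → (Fin n → ℝ) → ℝ, (∀ j, AnalyticAt ℝ (F j) 0) → (∀ j, OrdGe (F j) (m j)) →
    ∀ p : JetIdx (n := n) m, ∑ t, (p.2 t : ℕ) ≤ m p.1 →
      OrdGe (fun x => fderiv ℝ (fun u => f (x, u)) (jet m F x) (Pi.single p 1))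
        (∑ t, (p.2 t : ℕ) + 1 - m p.1)

lemma vanishesTo_hadamardCoeff_jet {f : (Fin n → ℝ) × (JetIdx (n := n) m → ℝ) → ℝ}
    (hreg : IsRegularJetMap m f) (hU : IsOpen U) (h0 : 0 ∈ U)
    (hFs : ∀ j, ContDiffOn ℝ ∞ (F j) U) (hGs : ∀ j, ContDiffOn ℝ ∞ (G j) U)
    (hFa : ∀ j, AnalyticAt ℝ (F j) 0) (hGa : ∀ j, AnalyticAt ℝ (G j) 0)
    (hF : ∀ j, OrdGe (F j) (m j)) (hG : ∀ j, OrdGe (G j) (m j))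
    {p : JetIdx (n := n) m} (hp : ∑ t, (p.2 t : ℕ) ≤ m p.1) :
    VanishesTo (fun x => hadamardCoeff f p x (jet m F x) (jet m G x))
      (∑ t, (p.2 t : ℕ) + 1 - m p.1) := by
  rcases hp.lt_or_eq with hlt | heq
  · rw [show ∑ t, (p.2 t : ℕ) + 1 - m p.1 = 0 by omega]
    exact vanishesTo_order_zero _
  rw [heq, Nat.add_sub_cancel_left, VanishesTo.one_iff]
  refine hadamardCoeff_eq_zero fun t => ?_
  have hjet : jet m G 0 + t • (jet m F 0 - jet m G 0)
      = jet m (fun j y => t * F j y + (1 - t) * G j y) 0 := by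
    rw [jet_linear_comb m hU hFs hGs t (1 - t) h0]
    module
  have h := hreg (fun j y => t * F j y + (1 - t) * G j y) (fun j => by fun_prop)
    (fun j => (hF j).linear_comb hU h0 (hFs j) (hGs j) (hG j) t (1 - t)) p hp 0 (by simp [heq])
  rwa [pdm_zero, ← hjet] at h

lemma vanishesTo_jet_sub_mul_hadamardCoeff {f : (Fin n → ℝ) × (JetIdx (n := n) m → ℝ) → ℝ}
    (hf : ContDiff ℝ ∞ f) (hreg : IsRegularJetMap m f) (hU : IsOpen U) (h0 : 0 ∈ U)
    (hFs : ∀ j, ContDiffOn ℝ ∞ (F j) U) (hGs : ∀ j, ContDiffOn ℝ ∞ (G j) U)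
    (hFa : ∀ j, AnalyticAt ℝ (F j) 0) (hGa : ∀ j, AnalyticAt ℝ (G j) 0)
    (hF : ∀ j, OrdGe (F j) (m j)) (hG : ∀ j, OrdGe (G j) (m j)) {N : ℕ} {p : JetIdx (n := n) m}
    (hFG : OrdGe (fun x => F p.1 x - G p.1 x) (N + m p.1)) (hp : ∑ t, (p.2 t : ℕ) ≤ m p.1) :
    VanishesTo
      (fun x => (jet m F x p - jet m G x p) * hadamardCoeff f p x (jet m F x) (jet m G x))
      (N + 1) :=
  ((vanishesTo_jet_sub m hU h0 hFs hGs p hFG).mul hU h0 (contDiffOn_jet_sub m hU hFs hGs p)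
    (contDiffOn_hadamardCoeff_jet m hf hU hFs hGs p)
    (vanishesTo_hadamardCoeff_jet m hreg hU h0 hFs hGs hFa hGa hF hG hp)).mono (by omega)

end Jets

/-- If `𝒯(F)(x) = W(x, j^𝐦_x F)` is an analytic differential map of order `𝐦` which is
regular with `q = 0` (i.e. `ord₀(∂W_i/∂u_{j,α}(x, ∂F)) ≥ max(0, |α| + 1 - m_j)` along
any admissible `F`), then `𝒯` strictly increases the order at the origin by `0`:
`ord₀(𝒯(F) - 𝒯(G)) > ord₀(F - G)` (orders of tuples being measured relative to the
grading shifted by `𝐦`). -/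
theorem regular_strictly_increases_order
    {r s : ℕ} (m : Fin r → ℕ)
    (W : (Fin n → ℝ) × (JetIdx (n := n) m → ℝ) → Fin s → ℝ)
    (hWan : ∀ p, AnalyticAt ℝ W p)
    -- `W` depends only on the legitimate jet coordinates, those with `|α| ≤ m_j` :
    (hWdep : ∀ (i : Fin s) (x : Fin n → ℝ) (u u' : JetIdx (n := n) m → ℝ),
      (∀ p : JetIdx (n := n) m, (∑ t, ((p.2 t : ℕ))) ≤ m p.1 → u p = u' p) →
      W (x, u) i = W (x, u') i)
    -- regularity with `q = 0` :
    (hreg : ∀ F : Fin r → (Fin n → ℝ) → ℝ,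
      (∀ j, AnalyticAt ℝ (F j) 0) → (∀ j, OrdGe (F j) (m j)) →
      ∀ (i : Fin s) (p : JetIdx (n := n) m), (∑ t, ((p.2 t : ℕ))) ≤ m p.1 →
        OrdGe (fun x => fderiv ℝ (fun u => W (x, u) i) (jet m F x) (Pi.single p 1))
          ((∑ t, ((p.2 t : ℕ))) + 1 - m p.1)) :
    ∀ F G : Fin r → (Fin n → ℝ) → ℝ,
      (∀ j, AnalyticAt ℝ (F j) 0) → (∀ j, AnalyticAt ℝ (G j) 0) →
      (∀ j, OrdGe (F j) (m j)) → (∀ j, OrdGe (G j) (m j)) →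
      ∀ N : ℕ, (∀ j, OrdGe (fun x => F j x - G j x) (N + m j)) →
      ∀ i : Fin s,
        OrdGe (fun x => W (x, jet m F x) i - W (x, jet m G x) i) (N + 1) := by
  intro F G hFa hGa hF hG N hFG i
  obtain ⟨U, hU, h0, hFGs⟩ := exists_isOpen_forall_contDiffOn (𝕜 := ℝ)
    (f := Sum.elim F G) (x := 0) (by rintro (j | j); exacts [hFa j, hGa j])
  have hFs (j : Fin r) : ContDiffOn ℝ ∞ (F j) U := hFGs (.inl j)
  have hGs (j : Fin r) : ContDiffOn ℝ ∞ (G j) U := hFGs (.inr j)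
  have hW : ContDiff ℝ ∞ fun z => W z i :=
    contDiff_pi.mp (AnalyticOnNhd.contDiff fun z _ => hWan z) i
  refine ordGe_sub_of_forall_vanishesTo m hW hU h0 hFs hGs fun p => ?_
  by_cases hp : ∑ t, (p.2 t : ℕ) ≤ m p.1
  · exact vanishesTo_jet_sub_mul_hadamardCoeff m hW (fun F hFa hF => hreg F hFa hF i) hU h0
      hFs hGs hFa hGa hF hG (hFG p.1) hp
  · have hA0 (x : Fin n → ℝ) :
        hadamardCoeff (fun z => W z i) p x (jet m F x) (jet m G x) = 0 :=
      hadamardCoeff_eq_zero_of_forall_add_smul_single (fun u c => hWdep i x _ _ fun q hq => by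
        simp [show q ≠ p by rintro rfl; exact hp hq]) _ _
    simpa only [hA0, mul_zero] using vanishesTo_const_zero _

end Stmt16
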